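/- Consider the cellular automaton on ℤ in which every cell uses the rule φ2 (φ2(x,y) = 1 iff (x,y) = (0,1)), with i.i.d. Bernoulli(1/2) initial states X_i(0), i ∈ ℤ. Then almost surely cell 0 does not stabilize; that is, the probability σ_* of stabilization equals 0. -/

import Mathlib

open MeasureTheory ProbabilityTheory

/-- A Boolean rule: a function `{0,1} × {0,1} → {0,1}`. -/
abbrev Rule : Type := Bool → Bool → Bool

/-- The rule `φ2`: `φ2(x,y) = 1` iff `(x,y) = (0,1)`. -/
def phi2 : Rule := fun x y => !x && y

/-- Evolution of an inhomogeneous cellular automaton on ℤ: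
`x_i(t+1) = φ_i(x_{i-1}(t), x_{i+1}(t))`. -/
def evolveZ (φ : ℤ → Rule) (x0 : ℤ → Bool) : ℕ → ℤ → Bool
  | 0 => x0
  | t+1 => fun i => φ i (evolveZ φ x0 t (i-1)) (evolveZ φ x0 t (i+1))

/-- A trajectory `t ↦ x(t)` stabilizes if it is eventually constant. -/
def Stabilizes (x : ℕ → Bool) : Prop := ∃ T, ∀ t, T ≤ t → x t = x T

/-- Closed form for the φ2-automaton: in the left-moving frame the rule is monotone,
and after one step the configuration freezes, giving
`x_i(t+1) = x0(i+t+1) && !x0(i+t-1)`. -/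
lemma evolve_phi2_eq (X : ℤ → Bool) (t : ℕ) :
    ∀ i : ℤ, evolveZ (fun _ => phi2) X (t+1) i = (X (i + t + 1) && !X (i + t - 1)) := by
  induction t with
  | zero =>
    intro i
    show phi2 (X (i-1)) (X (i+1)) = _
    simp [phi2, Bool.and_comm]
  | succ t ih =>
    intro i
    show phi2 (evolveZ (fun _ => phi2) X (t+1) (i-1)) (evolveZ (fun _ => phi2) X (t+1) (i+1)) = _
    rw [ih (i-1), ih (i+1)]
    have e1 : i - 1 + (t:ℤ) + 1 = i + t := by ring
    have e2 : i - 1 + (t:ℤ) - 1 = i + t - 2 := by ring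
    have e3 : i + 1 + (t:ℤ) + 1 = i + t + 2 := by ring
    have e4 : i + 1 + (t:ℤ) - 1 = i + t := by ring
    have e5 : i + ((t:ℕ)+1 : ℕ) + 1 = i + (t:ℤ) + 2 := by push_cast; ring
    have e6 : i + ((t:ℕ)+1 : ℕ) - 1 = i + (t:ℤ) := by push_cast; ring
    rw [e1, e2, e3, e4, e5, e6]
    have key : ∀ a b c : Bool, phi2 (a && !b) (c && !a) = (c && !a) := by decide
    exact key _ _ _

/-- The event that an arithmetic progression of the i.i.d. fair coins is constant is null. -/
lemma tail_null {Ω : Type*} [MeasurableSpace Ω] (P : Measure Ω) [IsProbabilityMeasure P]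
    (X : ℤ → Ω → Bool) (hmeas : ∀ i, Measurable (X i))
    (hindep : iIndepFun X P)
    (hber : ∀ i, P {ω | X i ω = true} = 1/2) (N : ℕ) (b : Bool) :
    P {ω | ∀ k : ℕ, X ((N + 2*k : ℕ) : ℤ) ω = b} = 0 := by
  have hhalf : ∀ i : ℤ, P (X i ⁻¹' {b}) = 1/2 := by
    intro i
    cases b
    · have hm : MeasurableSet {ω | X i ω = true} := (hmeas i) (measurableSet_singleton true)
      have he : X i ⁻¹' {false} = {ω | X i ω = true}ᶜ := by ext ω; simp
      rw [he, measure_compl hm (measure_ne_top _ _), hber i, measure_univ, one_div,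
        ENNReal.one_sub_inv_two]
    · exact hber i
  have hbound : ∀ m : ℕ, P {ω | ∀ k : ℕ, X ((N + 2*k : ℕ) : ℤ) ω = b} ≤ (1/2 : ENNReal)^m := by
    intro m
    set S : Finset ℤ := (Finset.range m).image (fun k : ℕ => (N : ℤ) + 2*(k:ℤ)) with hS
    have hsub : {ω | ∀ k : ℕ, X ((N + 2*k : ℕ) : ℤ) ω = b} ⊆ ⋂ i ∈ S, (X i ⁻¹' {b}) := by
      intro ω hω
      simp only [Set.mem_iInter]
      intro i hi
      simp only [hS, Finset.mem_image, Finset.mem_range] at hi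
      obtain ⟨k, _, rfl⟩ := hi
      have h := hω k
      push_cast at h
      simpa [Set.mem_preimage] using h
    have hP : P (⋂ i ∈ S, (X i ⁻¹' {b})) = ∏ i ∈ S, P (X i ⁻¹' {b}) :=
      hindep.meas_biInter (S := S) (s := fun i => X i ⁻¹' {b}) (fun i _ => ⟨{b}, trivial, rfl⟩)
    have hcard : S.card = m := by
      rw [hS, Finset.card_image_of_injective _ (fun a b h => by omega), Finset.card_range]
    have hprod : ∏ i ∈ S, P (X i ⁻¹' {b}) = (1/2 : ENNReal)^m := by
      rw [Finset.prod_congr rfl (fun i _ => hhalf i), Finset.prod_const, hcard]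
    exact (measure_mono hsub).trans ((hP.trans hprod).le)
  have htend : Filter.Tendsto (fun m : ℕ => (1/2 : ENNReal)^m) Filter.atTop (nhds 0) :=
    ENNReal.tendsto_pow_atTop_nhds_zero_of_lt_one
      (by rw [one_div]; exact ENNReal.inv_lt_one.mpr ENNReal.one_lt_two)
  exact le_antisymm (ge_of_tendsto' htend hbound) zero_le

/-- for the φ2-CA on ℤ with i.i.d. Bernoulli(1/2) initial states,
almost surely cell 0 does not stabilize: `σ_* = 0`. -/
theorem stmt18 {Ω : Type*} [MeasurableSpace Ω] (P : Measure Ω) [IsProbabilityMeasure P]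
    (X : ℤ → Ω → Bool) (hmeas : ∀ i, Measurable (X i))
    (hindep : iIndepFun X P)
    (hber : ∀ i, P {ω | X i ω = true} = 1/2) :
    P {ω | Stabilizes (fun t => evolveZ (fun _ => phi2) (fun j => X j ω) t 0)} = 0 := by
  have hsubset : {ω | Stabilizes (fun t => evolveZ (fun _ => phi2) (fun j => X j ω) t 0)}
      ⊆ ⋃ (N : ℕ), ⋃ (b : Bool), {ω | ∀ k : ℕ, X ((N + 2*k : ℕ) : ℤ) ω = b} := by
    intro ω hω
    obtain ⟨T, hT⟩ := hω
    set f : ℕ → Bool := fun t => evolveZ (fun _ => phi2) (fun j => X j ω) t 0 with hf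
    set T' : ℕ := T + 1 with hT'def
    have hT' : ∀ t, T' ≤ t → f t = f T' := fun t ht =>
      (hT t (by omega)).trans (hT T' (by omega)).symm
    have form : ∀ t : ℕ, 1 ≤ t → f t = (X (t:ℤ) ω && !X ((t:ℤ) - 2) ω) := by
      intro t ht
      obtain ⟨s, rfl⟩ : ∃ s, t = s + 1 := ⟨t - 1, by omega⟩
      have this := evolve_phi2_eq (fun j => X j ω) s 0
      have e1 : (0:ℤ) + s + 1 = ((s+1:ℕ):ℤ) := by push_cast; ring
      have e2 : (0:ℤ) + s - 1 = ((s+1:ℕ):ℤ) - 2 := by push_cast; ring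
      rw [e1, e2] at this
      exact this
    cases hfT : f T' with
    | true =>
      exfalso
      have a1 := (form T' (by omega)).symm.trans ((hT' T' le_rfl).trans hfT)
      have a2 := (form (T'+2) (by omega)).symm.trans ((hT' (T'+2) (by omega)).trans hfT)
      rw [Bool.and_eq_true] at a1 a2
      have e3 : ((T'+2:ℕ):ℤ) - 2 = ((T':ℕ):ℤ) := by push_cast; ring
      rw [e3] at a2
      rw [a1.1] at a2
      simp at a2
    | false =>
      have himp : ∀ t : ℕ, T' ≤ t → X ((t:ℤ) - 2) ω = false → X (t:ℤ) ω = false := by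
        intro t ht h0
        have hft : f t = false := (hT' t ht).trans hfT
        rw [form t (by omega), h0] at hft
        simpa using hft
      by_cases hall : ∀ k : ℕ, X ((T' + 2*k : ℕ) : ℤ) ω = true
      · exact Set.mem_iUnion.2 ⟨T', Set.mem_iUnion.2 ⟨true, hall⟩⟩
      · push_neg at hall
        obtain ⟨k0, hk0⟩ := hall
        replace hk0 : X ((T' + 2*k0 : ℕ) : ℤ) ω = false := Bool.eq_false_iff.mpr hk0
        refine Set.mem_iUnion.2 ⟨T' + 2*k0, Set.mem_iUnion.2 ⟨false, ?_⟩⟩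
        intro k
        induction k with
        | zero =>
          have e : ((T' + 2*k0 + 2*0 : ℕ) : ℤ) = ((T' + 2*k0 : ℕ) : ℤ) := by push_cast; ring
          rw [e]; exact hk0
        | succ k ih =>
          have e : ((T' + 2*k0 + 2*(k+1) : ℕ) : ℤ) - 2 = ((T' + 2*k0 + 2*k : ℕ) : ℤ) := by
            push_cast; ring
          refine himp (T' + 2*k0 + 2*(k+1)) (by omega) ?_
          rw [e]; exact ih
  refine measure_mono_null hsubset ?_
  exact measure_iUnion_null fun N => measure_iUnion_null fun b => tail_null P X hmeas hindep hber N b
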